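/- arXiv:1609.08137 — 2 statements merged into one kernel-verified Lean document; each statement's English description precedes it below -/
import Mathlib

section
/- Let σ > 0 and r ≥ 0. The integral over v₀ ∈ [0,∞) of (∫₀^r f_U(u | v₀) du)·f_{V₀}(v₀) dv₀ equals 1 − exp(−r²/(4σ²)), where f_U(u | v) is the Rician density with parameters ν = v, σ, and f_{V₀}(v) = (v/σ²)·exp(−v²/(2σ²)) is the Rayleigh density. -/
open Real MeasureTheory Set

noncomputable def besselI0 (x : ℝ) : ℝ :=
  (1 / Real.pi) * ∫ θ in (0:ℝ)..Real.pi, Real.exp (x * Real.cos θ)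

noncomputable def ricePDF (σ ν u : ℝ) : ℝ :=
  (u / σ ^ 2) * Real.exp (-(u ^ 2 + ν ^ 2) / (2 * σ ^ 2)) * besselI0 (u * ν / σ ^ 2)

noncomputable def marcumQ (α β : ℝ) : ℝ :=
  ∫ y in Set.Ioi β, y * Real.exp (-(y ^ 2 + α ^ 2) / 2) * besselI0 (α * y)

noncomputable def rayleighPDF (σ v : ℝ) : ℝ :=
  (v / σ ^ 2) * Real.exp (-v ^ 2 / (2 * σ ^ 2))

open scoped Nat

/-!
Expanding `I₀(x) = ∑ (x²/4)ᵏ / (k!)²` and integrating termwise against the Gaussian moments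
`∫₀^∞ v^(2k+1) e^(-b v²) dv = k! / (2 b^(k+1))` gives
`∫₀^∞ v e^(-b v²) I₀(c v) dv = e^(c²/(4b)) / (2b)`. By Fubini, the Rayleigh mixture of the Rice
densities is therefore itself the Rayleigh density of scale `√2 σ`.
-/

theorem continuous_besselI0 : Continuous besselI0 :=
  continuous_const.mul <| intervalIntegral.continuous_parametric_intervalIntegral_of_continuous'
    (by fun_prop) 0 π

theorem integral_cos_pow_odd (k : ℕ) : ∫ θ in (0:ℝ)..π, cos θ ^ (2 * k + 1) = 0 := by
  have h := intervalIntegral.integral_comp_sub_left (fun θ => cos θ ^ (2 * k + 1)) π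
    (a := 0) (b := π)
  simp only [cos_pi_sub, Odd.neg_pow (odd_two_mul_add_one k), intervalIntegral.integral_neg,
    sub_zero, sub_self] at h
  linarith

theorem integral_cos_pow_even (k : ℕ) :
    ∫ θ in (0:ℝ)..π, cos θ ^ (2 * k) = π * (2 * k)! / (4 ^ k * (k ! : ℝ) ^ 2) := by
  induction k with
  | zero => simp
  | succ k ih =>
    rw [show 2 * (k + 1) = 2 * k + 2 by ring, integral_cos_pow, ih]
    simp only [sin_pi, sin_zero, mul_zero, sub_zero, zero_div, zero_add]
    push_cast [Nat.factorial_succ]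
    field_simp
    ring

theorem hasSum_besselI0 (x : ℝ) :
    HasSum (fun k : ℕ => (x ^ 2 / 4) ^ k / (k ! : ℝ) ^ 2) (besselI0 x) := by
  have hexp : HasSum (fun n : ℕ => ∫ θ in (0:ℝ)..π, (x * cos θ) ^ n / n !)
      (∫ θ in (0:ℝ)..π, exp (x * cos θ)) := by
    refine intervalIntegral.hasSum_integral_of_dominated_convergence (fun n _ => |x| ^ n / n !)
      (fun n => (by fun_prop : Continuous _).aestronglyMeasurable) (fun n => ?_)
      (.of_forall fun _ _ => Real.summable_pow_div_factorial |x|) intervalIntegrable_const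
      (.of_forall fun θ _ => ?_)
    · refine .of_forall fun θ _ => ?_
      rw [norm_div, norm_pow, norm_mul, Real.norm_natCast, Real.norm_eq_abs, Real.norm_eq_abs]
      gcongr
      exact mul_le_of_le_one_right (abs_nonneg x) (abs_cos_le_one θ)
    · rw [exp_eq_exp_ℝ]
      exact NormedSpace.expSeries_div_hasSum_exp _
  have hterm (n : ℕ) : ∫ θ in (0:ℝ)..π, (x * cos θ) ^ n / n !
      = x ^ n / n ! * ∫ θ in (0:ℝ)..π, cos θ ^ n := by
    rw [← intervalIntegral.integral_const_mul]
    congr 1 with θ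
    ring
  simp only [hterm] at hexp
  rw [← (mul_right_injective₀ (two_ne_zero : (2 : ℕ) ≠ 0)).hasSum_iff] at hexp
  · refine (hexp.mul_left (1 / π)).congr_fun fun k => ?_
    rw [Function.comp_apply, integral_cos_pow_even, pow_mul, div_pow]
    field_simp
  · rintro n hn
    obtain ⟨k, rfl⟩ : Odd n :=
      Nat.not_even_iff_odd.mp fun ⟨m, h⟩ => hn ⟨m, show 2 * m = n by omega⟩
    simp [integral_cos_pow_odd]

theorem besselI0_nonneg (x : ℝ) : 0 ≤ besselI0 x :=
  (hasSum_besselI0 x).nonneg fun k => by positivity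

theorem besselI0_le_exp_abs (x : ℝ) : besselI0 x ≤ exp |x| := by
  have h : ∫ θ in (0:ℝ)..π, exp (x * cos θ) ≤ ∫ _ in (0:ℝ)..π, exp |x| := by
    refine intervalIntegral.integral_mono_on pi_pos.le
      (Continuous.intervalIntegrable (by fun_prop) _ _) intervalIntegrable_const
      fun θ _ => exp_le_exp.mpr ?_
    calc x * cos θ ≤ |x * cos θ| := le_abs_self _
      _ ≤ |x| := by rw [abs_mul]; exact mul_le_of_le_one_right (abs_nonneg x) (abs_cos_le_one θ)
  rw [intervalIntegral.integral_const, sub_zero, smul_eq_mul] at h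
  calc besselI0 x ≤ 1 / π * (π * exp |x|) := by unfold besselI0; gcongr
    _ = exp |x| := by field_simp

theorem integral_pow_mul_exp_neg_mul_sq {b : ℝ} (hb : 0 < b) (k : ℕ) :
    ∫ v in Ioi (0:ℝ), v ^ (2 * k + 1) * exp (-b * v ^ 2) = k ! / (2 * b ^ (k + 1)) := by
  have h := integral_rpow_mul_exp_neg_mul_rpow two_pos
    (neg_one_lt_zero.trans_le (Nat.cast_nonneg (2 * k + 1))) hb
  simp only [rpow_natCast, rpow_two] at h
  rw [h, show (-(((2 * k + 1 : ℕ) : ℝ) + 1) / 2) = -((k + 1 : ℕ) : ℝ) by push_cast; ring,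
    show ((((2 * k + 1 : ℕ) : ℝ) + 1) / 2) = (k : ℝ) + 1 by push_cast; ring,
    Gamma_nat_eq_factorial, rpow_neg hb.le, rpow_natCast]
  field_simp

theorem integral_mul_exp_neg_mul_sq_mul_besselI0 {b : ℝ} (hb : 0 < b) (c : ℝ) :
    ∫ v in Ioi (0:ℝ), v * exp (-b * v ^ 2) * besselI0 (c * v)
      = exp (c ^ 2 / (4 * b)) / (2 * b) := by
  have hF_tsum (v : ℝ) :
      ∑' k : ℕ, (c ^ 2 / 4) ^ k / (k ! : ℝ) ^ 2 * (v ^ (2 * k + 1) * exp (-b * v ^ 2))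
      = v * exp (-b * v ^ 2) * besselI0 (c * v) := by
    rw [← ((hasSum_besselI0 (c * v)).mul_left (v * exp (-b * v ^ 2))).tsum_eq]
    congr 1 with k
    rw [mul_pow, mul_div_right_comm, mul_pow, pow_succ v, pow_mul v]
    ring
  have hF_int (k : ℕ) : Integrable
      (fun v => (c ^ 2 / 4) ^ k / (k ! : ℝ) ^ 2 * (v ^ (2 * k + 1) * exp (-b * v ^ 2)))
      (volume.restrict (Ioi 0)) := by
    have h := integrableOn_rpow_mul_exp_neg_mul_sq hb
      (neg_one_lt_zero.trans_le (Nat.cast_nonneg (2 * k + 1)))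
    simp only [rpow_natCast] at h
    exact h.const_mul _
  have hF_integral (k : ℕ) : ∫ v in Ioi (0:ℝ),
      (c ^ 2 / 4) ^ k / (k ! : ℝ) ^ 2 * (v ^ (2 * k + 1) * exp (-b * v ^ 2))
      = (c ^ 2 / (4 * b)) ^ k / k ! * (1 / (2 * b)) := by
    rw [integral_const_mul, integral_pow_mul_exp_neg_mul_sq hb, div_pow, div_pow, mul_pow,
      pow_succ]
    field_simp
    ring
  have hF_norm (k : ℕ) :
      ∫ v in Ioi (0:ℝ), ‖(c ^ 2 / 4) ^ k / (k ! : ℝ) ^ 2 * (v ^ (2 * k + 1) * exp (-b * v ^ 2))‖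
      = (c ^ 2 / (4 * b)) ^ k / k ! * (1 / (2 * b)) := by
    rw [← hF_integral]
    exact setIntegral_congr_fun measurableSet_Ioi fun v (hv : 0 < v) =>
      norm_of_nonneg (by positivity)
  have h := hasSum_integral_of_summable_integral_norm hF_int <| by
    simp only [hF_norm]
    exact (summable_pow_div_factorial _).mul_right _
  rw [funext hF_tsum] at h
  simp only [hF_integral] at h
  have hexp := (NormedSpace.expSeries_div_hasSum_exp (c ^ 2 / (4 * b))).mul_right (1 / (2 * b))
  rw [← exp_eq_exp_ℝ, ← div_eq_mul_one_div] at hexp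
  exact h.unique hexp

theorem ricePDF_mul_rayleighPDF (σ v u : ℝ) :
    ricePDF σ v u * rayleighPDF σ v = u / σ ^ 4 * exp (-u ^ 2 / (2 * σ ^ 2)) *
      (v * exp (-(σ ^ 2)⁻¹ * v ^ 2) * besselI0 (u / σ ^ 2 * v)) := by
  have hexp : exp (-(u ^ 2 + v ^ 2) / (2 * σ ^ 2)) * exp (-v ^ 2 / (2 * σ ^ 2))
      = exp (-u ^ 2 / (2 * σ ^ 2)) * exp (-(σ ^ 2)⁻¹ * v ^ 2) := by
    rw [← exp_add, ← exp_add]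
    ring_nf
  unfold ricePDF rayleighPDF
  rw [show u * v / σ ^ 2 = u / σ ^ 2 * v by ring]
  linear_combination u / σ ^ 2 * (v / σ ^ 2) * besselI0 (u / σ ^ 2 * v) * hexp

theorem ricePDF_mul_rayleighPDF_nonneg (σ : ℝ) {v u : ℝ} (hv : 0 ≤ v) (hu : 0 ≤ u) :
    0 ≤ ricePDF σ v u * rayleighPDF σ v := by
  have := besselI0_nonneg (u * v / σ ^ 2)
  unfold ricePDF rayleighPDF
  positivity

theorem ricePDF_mul_rayleighPDF_le (σ : ℝ) {v u r : ℝ} (hv : 0 ≤ v) (hu : 0 ≤ u) (hur : u ≤ r) :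
    ricePDF σ v u * rayleighPDF σ v
      ≤ r / σ ^ 4 * exp (r ^ 2 / (2 * σ ^ 2)) * (v * exp (-(2 * σ ^ 2)⁻¹ * v ^ 2)) := by
  have hr : 0 ≤ r := hu.trans hur
  have hprefactor : u / σ ^ 4 * exp (-u ^ 2 / (2 * σ ^ 2)) ≤ r / σ ^ 4 :=
    calc u / σ ^ 4 * exp (-u ^ 2 / (2 * σ ^ 2)) ≤ u / σ ^ 4 * 1 := by
          gcongr
          exact exp_le_one_iff.mpr (div_nonpos_of_nonpos_of_nonneg (by nlinarith) (by positivity))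
      _ ≤ r / σ ^ 4 := by rw [mul_one]; gcongr
  have hbessel : besselI0 (u / σ ^ 2 * v) ≤ exp (r / σ ^ 2 * v) :=
    (besselI0_le_exp_abs _).trans <| exp_le_exp.mpr <| by
      rw [abs_of_nonneg (by positivity)]
      gcongr
  have hexponent : -(σ ^ 2)⁻¹ * v ^ 2 + r / σ ^ 2 * v
      ≤ r ^ 2 / (2 * σ ^ 2) + -(2 * σ ^ 2)⁻¹ * v ^ 2 := by
    have hsq : 0 ≤ (σ ^ 2)⁻¹ * (r - v) ^ 2 := by positivity
    linarith [show r ^ 2 / (2 * σ ^ 2) + -(2 * σ ^ 2)⁻¹ * v ^ 2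
      - (-(σ ^ 2)⁻¹ * v ^ 2 + r / σ ^ 2 * v) = (σ ^ 2)⁻¹ * (r - v) ^ 2 / 2 by ring]
  rw [ricePDF_mul_rayleighPDF]
  calc u / σ ^ 4 * exp (-u ^ 2 / (2 * σ ^ 2)) *
        (v * exp (-(σ ^ 2)⁻¹ * v ^ 2) * besselI0 (u / σ ^ 2 * v))
      ≤ r / σ ^ 4 * (v * exp (-(σ ^ 2)⁻¹ * v ^ 2) * exp (r / σ ^ 2 * v)) := by
        gcongr
        have := besselI0_nonneg (u / σ ^ 2 * v)
        positivity
    _ = r / σ ^ 4 * (v * exp (-(σ ^ 2)⁻¹ * v ^ 2 + r / σ ^ 2 * v)) := by rw [exp_add]; ring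
    _ ≤ r / σ ^ 4 * (v * exp (r ^ 2 / (2 * σ ^ 2) + -(2 * σ ^ 2)⁻¹ * v ^ 2)) := by gcongr
    _ = r / σ ^ 4 * exp (r ^ 2 / (2 * σ ^ 2)) * (v * exp (-(2 * σ ^ 2)⁻¹ * v ^ 2)) := by
        rw [exp_add]; ring

theorem integrable_ricePDF_mul_rayleighPDF {σ : ℝ} (hσ : σ ≠ 0) (r : ℝ) :
    Integrable (Function.uncurry fun v u => ricePDF σ v u * rayleighPDF σ v)
      ((volume.restrict (Ioi 0)).prod (volume.restrict (Ioc 0 r))) := by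
  have hbound : Integrable
      (fun z : ℝ × ℝ =>
        r / σ ^ 4 * exp (r ^ 2 / (2 * σ ^ 2)) * (z.1 * exp (-(2 * σ ^ 2)⁻¹ * z.1 ^ 2)))
      ((volume.restrict (Ioi 0)).prod (volume.restrict (Ioc 0 r))) :=
    (((integrable_mul_exp_neg_mul_sq (by positivity)).integrableOn).const_mul _).comp_fst _
  have hcont : Continuous (Function.uncurry fun v u => ricePDF σ v u * rayleighPDF σ v) := by
    have := continuous_besselI0
    unfold ricePDF rayleighPDF Function.uncurry
    fun_prop
  refine hbound.mono' hcont.aestronglyMeasurable ?_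
  rw [Measure.prod_restrict]
  filter_upwards [ae_restrict_mem (measurableSet_Ioi.prod measurableSet_Ioc)]
    with ⟨v, u⟩ ⟨hv, hu, hur⟩
  rw [Function.uncurry_apply_pair, norm_of_nonneg (ricePDF_mul_rayleighPDF_nonneg σ hv.le hu.le)]
  exact ricePDF_mul_rayleighPDF_le σ hv.le hu.le hur

theorem integral_ricePDF_mul_rayleighPDF {σ : ℝ} (hσ : σ ≠ 0) (u : ℝ) :
    ∫ v in Ioi (0:ℝ), ricePDF σ v u * rayleighPDF σ v = rayleighPDF (√2 * σ) u := by
  simp_rw [ricePDF_mul_rayleighPDF]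
  rw [integral_const_mul, integral_mul_exp_neg_mul_sq_mul_besselI0 (by positivity)]
  unfold rayleighPDF
  rw [mul_pow, sq_sqrt zero_le_two, mul_assoc, mul_div_assoc', ← exp_add]
  field_simp
  ring_nf

theorem integral_rayleighPDF (s r : ℝ) :
    ∫ u in (0:ℝ)..r, rayleighPDF s u = 1 - exp (-r ^ 2 / (2 * s ^ 2)) := by
  have hderiv (u : ℝ) : HasDerivAt (fun t => -exp (-t ^ 2 / (2 * s ^ 2))) (rayleighPDF s u) u := by
    have h : HasDerivAt (fun t => -t ^ 2 / (2 * s ^ 2)) (-(2 * u) / (2 * s ^ 2)) u := by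
      simpa using (hasDerivAt_pow 2 u).neg.div_const (2 * s ^ 2)
    refine h.exp.neg.congr_deriv ?_
    unfold rayleighPDF
    ring
  have hcont : Continuous (rayleighPDF s) := by unfold rayleighPDF; fun_prop
  rw [intervalIntegral.integral_eq_sub_of_hasDerivAt (fun u _ => hderiv u)
    (hcont.intervalIntegrable _ _), zero_pow two_ne_zero, neg_zero, zero_div, exp_zero]
  ring

theorem rayleigh_mixture_of_rice_cdf (σ r : ℝ) (hσ : 0 < σ) (hr : 0 ≤ r) :
    ∫ v in Set.Ioi (0:ℝ), (∫ u in (0:ℝ)..r, ricePDF σ v u) * rayleighPDF σ v =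
      1 - Real.exp (-r ^ 2 / (4 * σ ^ 2)) := by
  calc ∫ v in Ioi (0:ℝ), (∫ u in (0:ℝ)..r, ricePDF σ v u) * rayleighPDF σ v
      = ∫ v in Ioi (0:ℝ), ∫ u in Ioc (0:ℝ) r, ricePDF σ v u * rayleighPDF σ v :=
        setIntegral_congr_fun measurableSet_Ioi fun v _ => by
          rw [intervalIntegral.integral_of_le hr, integral_mul_const]
    _ = ∫ u in Ioc (0:ℝ) r, ∫ v in Ioi (0:ℝ), ricePDF σ v u * rayleighPDF σ v :=
        integral_integral_swap (integrable_ricePDF_mul_rayleighPDF hσ.ne' r)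
    _ = ∫ u in (0:ℝ)..r, rayleighPDF (√2 * σ) u := by
        rw [intervalIntegral.integral_of_le hr]
        exact setIntegral_congr_fun measurableSet_Ioc fun u _ =>
          integral_ricePDF_mul_rayleighPDF hσ.ne' u
    _ = 1 - exp (-r ^ 2 / (4 * σ ^ 2)) := by
        rw [integral_rayleighPDF, mul_pow, sq_sqrt zero_le_two, ← mul_assoc]
        norm_num
end

section
/- For σ > 0 and u ≥ 0, let f_U(u|v) = (u/σ²)·exp(−(u²+v²)/(2σ²))·I₀(uv/σ²) be the Rician density with parameter ν = v and scale σ; then ∫₀^∞ f_U(u|v)·v dv = ∫₀^∞ (u/σ²)·exp(−(u²+v²)/(2σ²))·I₀(uv/σ²)·v dv = u. -/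
open Real MeasureTheory Set

/-- Gaussian integral with a linear term. -/
lemma gauss_lin (b a : ℝ) (hb : 0 < b) :
    ∫ x : ℝ, Real.exp (-b * x ^ 2 + a * x)
      = Real.sqrt (π / b) * Real.exp (a ^ 2 / (4 * b)) := by
  have h : ∀ x : ℝ, -b * x ^ 2 + a * x = a ^ 2 / (4 * b) + -b * (x - a / (2 * b)) ^ 2 := by
    intro x; field_simp; ring
  calc ∫ x : ℝ, Real.exp (-b * x ^ 2 + a * x)
      = ∫ x : ℝ, Real.exp (a ^ 2 / (4 * b)) * Real.exp (-b * (x - a / (2 * b)) ^ 2) := by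
        congr 1; funext x; rw [← Real.exp_add, ← h]
    _ = Real.exp (a ^ 2 / (4 * b)) * ∫ x : ℝ, Real.exp (-b * (x - a / (2 * b)) ^ 2) :=
        integral_const_mul _ _
    _ = Real.sqrt (π / b) * Real.exp (a ^ 2 / (4 * b)) := by
        rw [integral_sub_right_eq_self (fun x => Real.exp (-b * x ^ 2)) (a / (2 * b)),
          integral_gaussian]
        ring

lemma integrable_g {b : ℝ} (hb : 0 < b) (c : ℝ) :
    IntegrableOn (fun v : ℝ => v * Real.exp (-b * v ^ 2 + c * v)) (Ioi 0) := by
  have hint : Integrable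
      (fun v : ℝ => Real.exp ((c + 1) ^ 2 / (4 * b)) *
        Real.exp (-b * (v - (c + 1) / (2 * b)) ^ 2)) volume :=
    ((integrable_exp_neg_mul_sq hb).comp_sub_right ((c + 1) / (2 * b))).const_mul _
  refine (hint.restrict (s := Ioi 0)).mono' ?_ ?_
  · exact (Continuous.aestronglyMeasurable (by fun_prop)).restrict
  · rw [ae_restrict_iff' measurableSet_Ioi]
    refine Filter.Eventually.of_forall fun v hv => ?_
    have hv0 : (0:ℝ) < v := hv
    rw [Real.norm_eq_abs, abs_mul, abs_of_pos hv0, abs_of_pos (Real.exp_pos _)]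
    calc v * Real.exp (-b * v ^ 2 + c * v)
        ≤ Real.exp v * Real.exp (-b * v ^ 2 + c * v) := by
          apply mul_le_mul_of_nonneg_right _ (Real.exp_pos _).le
          linarith [Real.add_one_le_exp v]
      _ = Real.exp (-b * v ^ 2 + (c + 1) * v) := by rw [← Real.exp_add]; ring_nf
      _ = Real.exp ((c + 1) ^ 2 / (4 * b)) * Real.exp (-b * (v - (c + 1) / (2 * b)) ^ 2) := by
          rw [← Real.exp_add]; congr 1; field_simp; ring

theorem rice_weighted_integral (σ u : ℝ) (hσ : 0 < σ) (hu : 0 ≤ u) :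
    ∫ v in Set.Ioi (0:ℝ),
      (u / σ ^ 2) * Real.exp (-(u ^ 2 + v ^ 2) / (2 * σ ^ 2)) *
        besselI0 (u * v / σ ^ 2) * v = u := by
  have hσ2 : (0:ℝ) < σ ^ 2 := by positivity
  have hb : (0:ℝ) < 1 / (2 * σ ^ 2) := by positivity
  set b : ℝ := 1 / (2 * σ ^ 2) with hbdef
  set a : ℝ := u / σ ^ 2 with hadef
  set F : ℝ × ℝ → ℝ :=
    fun p => p.1 * Real.exp (-b * p.1 ^ 2) * Real.exp (a * p.1 * Real.cos p.2) with hFdef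
  have hS : MeasurableSet (Ioi (0:ℝ) ×ˢ Ioo (0:ℝ) π) := measurableSet_Ioi.prod measurableSet_Ioo
  -- Integrability of F on the product set
  have hFint : IntegrableOn F (Ioi (0:ℝ) ×ˢ Ioo (0:ℝ) π) := by
    have hg : IntegrableOn (fun v : ℝ => v * Real.exp (-b * v ^ 2 + |a| * v)) (Ioi 0) :=
      integrable_g hb |a|
    have h1 : IntegrableOn (fun _ : ℝ => (1:ℝ)) (Ioo (0:ℝ) π) :=
      integrableOn_const measure_Ioo_lt_top.ne
    have hprod : Integrable
        (fun z : ℝ × ℝ => (z.1 * Real.exp (-b * z.1 ^ 2 + |a| * z.1)) * 1)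
        ((volume.restrict (Ioi 0)).prod (volume.restrict (Ioo 0 π))) := hg.mul_prod h1
    rw [Measure.prod_restrict] at hprod
    refine hprod.mono' ?_ ?_
    · exact (Continuous.aestronglyMeasurable (by fun_prop)).restrict
    · rw [ae_restrict_iff' hS]
      refine Filter.Eventually.of_forall fun p hp => ?_
      have h1 : (0:ℝ) < p.1 := hp.1
      have hcos : a * p.1 * Real.cos p.2 ≤ |a| * p.1 := by
        calc a * p.1 * Real.cos p.2 ≤ |a * p.1 * Real.cos p.2| := le_abs_self _
          _ = |a| * p.1 * |Real.cos p.2| := by rw [abs_mul, abs_mul, abs_of_pos h1]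
          _ ≤ |a| * p.1 * 1 :=
              mul_le_mul_of_nonneg_left (Real.abs_cos_le_one _) (by positivity)
          _ = |a| * p.1 := mul_one _
      simp only [hFdef, Real.norm_eq_abs, mul_one]
      rw [abs_mul, abs_mul, abs_of_pos h1, abs_of_pos (Real.exp_pos _),
        abs_of_pos (Real.exp_pos _), mul_assoc, ← Real.exp_add]
      apply mul_le_mul_of_nonneg_left _ h1.le
      exact Real.exp_le_exp.2 (by linarith)
  -- Key 2D computation via polar coordinates
  have key : ∫ z in Ioi (0:ℝ) ×ˢ Ioo (0:ℝ) π, F z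
      = (Real.sqrt (π / b) * Real.exp (a ^ 2 / (4 * b))) * (Real.sqrt (π / b) / 2) := by
    set f : ℝ × ℝ → ℝ := fun q =>
      (Real.exp (-b * q.1 ^ 2) * Real.exp (a * q.1)) *
        (if 0 < q.2 then Real.exp (-b * q.2 ^ 2) else 0) with hfdef
    have hind : polarCoord.target.indicator (fun p => p.1 • f (polarCoord.symm p))
        = (Ioi (0:ℝ) ×ˢ Ioo (0:ℝ) π).indicator F := by
      funext p
      rw [polarCoord_target]
      by_cases hmem : p ∈ Ioi (0:ℝ) ×ˢ Ioo (-π) π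
      · have h1 : (0:ℝ) < p.1 := hmem.1
        rw [indicator_of_mem hmem]
        by_cases hθ : p.2 ∈ Ioo (0:ℝ) π
        · have hpS : p ∈ Ioi (0:ℝ) ×ˢ Ioo (0:ℝ) π := ⟨h1, hθ⟩
          rw [indicator_of_mem hpS]
          have hsin : 0 < Real.sin p.2 := Real.sin_pos_of_pos_of_lt_pi hθ.1 hθ.2
          have hpos : 0 < p.1 * Real.sin p.2 := mul_pos h1 hsin
          simp only [hfdef, hFdef, polarCoord_symm_apply, smul_eq_mul, if_pos hpos]
          have hsq : -b * (p.1 * Real.cos p.2) ^ 2 + -b * (p.1 * Real.sin p.2) ^ 2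
              = -b * p.1 ^ 2 := by
            have h := Real.sin_sq_add_cos_sq p.2
            linear_combination (-(b) * p.1 ^ 2) * h
          have hmul : Real.exp (-b * (p.1 * Real.cos p.2) ^ 2) *
              Real.exp (-b * (p.1 * Real.sin p.2) ^ 2) = Real.exp (-b * p.1 ^ 2) := by
            rw [← Real.exp_add, hsq]
          have hexp2 : a * (p.1 * Real.cos p.2) = a * p.1 * Real.cos p.2 :=
            (mul_assoc _ _ _).symm
          rw [hexp2]
          calc p.1 * (Real.exp (-b * (p.1 * Real.cos p.2) ^ 2) *
                Real.exp (a * p.1 * Real.cos p.2) * Real.exp (-b * (p.1 * Real.sin p.2) ^ 2))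
              = p.1 * (Real.exp (-b * (p.1 * Real.cos p.2) ^ 2) *
                  Real.exp (-b * (p.1 * Real.sin p.2) ^ 2)) * Real.exp (a * p.1 * Real.cos p.2) := by
                ring
            _ = p.1 * Real.exp (-b * p.1 ^ 2) * Real.exp (a * p.1 * Real.cos p.2) := by
                rw [hmul]
        · have hpS : p ∉ Ioi (0:ℝ) ×ˢ Ioo (0:ℝ) π := fun h => hθ h.2
          rw [indicator_of_notMem hpS]
          have hθ2 : p.2 ≤ 0 := by
            rcases hmem.2 with ⟨hl, hr⟩
            by_contra hc
            exact hθ ⟨lt_of_not_ge hc, hr⟩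
          have hsin : Real.sin p.2 ≤ 0 :=
            Real.sin_nonpos_of_nonpos_of_neg_pi_le hθ2 hmem.2.1.le
          have hns : ¬ (0 < p.1 * Real.sin p.2) := by
            push_neg
            exact mul_nonpos_of_nonneg_of_nonpos h1.le hsin
          simp only [hfdef, polarCoord_symm_apply, smul_eq_mul, if_neg hns, mul_zero]
      · rw [indicator_of_notMem hmem]
        have hpS : p ∉ Ioi (0:ℝ) ×ˢ Ioo (0:ℝ) π := by
          intro h
          exact hmem ⟨h.1, ⟨by linarith [h.2.1, Real.pi_pos], h.2.2⟩⟩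
        rw [indicator_of_notMem hpS]
    have hpolar := integral_comp_polarCoord_symm f
    rw [← integral_indicator (polarCoord.open_target.measurableSet), hind,
      integral_indicator hS] at hpolar
    have h2d : (∫ p : ℝ × ℝ, f p)
        = (∫ x : ℝ, Real.exp (-b * x ^ 2) * Real.exp (a * x)) *
          ∫ y : ℝ, (if 0 < y then Real.exp (-b * y ^ 2) else 0) := by
      rw [Measure.volume_eq_prod]
      exact integral_prod_mul (fun x : ℝ => Real.exp (-b * x ^ 2) * Real.exp (a * x))
        (fun y : ℝ => if 0 < y then Real.exp (-b * y ^ 2) else 0)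
    rw [hpolar, h2d]
    congr 1
    · rw [← gauss_lin b a hb]
      congr 1; funext x; rw [← Real.exp_add]
    · rw [← integral_gaussian_Ioi b, ← integral_indicator measurableSet_Ioi]
      congr 1
  -- Iterated integral form
  have hiter : ∫ v in Ioi (0:ℝ), ∫ θ in Ioo (0:ℝ) π, F (v, θ)
      = (Real.sqrt (π / b) * Real.exp (a ^ 2 / (4 * b))) * (Real.sqrt (π / b) / 2) := by
    rw [← setIntegral_prod F hFint, ← Measure.volume_eq_prod, key]
  -- Pointwise rewriting of the integrand
  have hpt : ∀ v : ℝ,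
      (u / σ ^ 2) * Real.exp (-(u ^ 2 + v ^ 2) / (2 * σ ^ 2)) * besselI0 (u * v / σ ^ 2) * v
        = (u / (π * σ ^ 2) * Real.exp (-u ^ 2 / (2 * σ ^ 2))) *
            ∫ θ in Ioo (0:ℝ) π, F (v, θ) := by
    intro v
    have hav : u * v / σ ^ 2 = a * v := by rw [hadef]; ring
    have h2 : besselI0 (u * v / σ ^ 2)
        = (1 / π) * ∫ θ in Ioo (0:ℝ) π, Real.exp (a * v * Real.cos θ) := by
      rw [besselI0, hav, intervalIntegral.integral_of_le Real.pi_pos.le,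
        integral_Ioc_eq_integral_Ioo]
    have h1 : ∫ θ in Ioo (0:ℝ) π, F (v, θ)
        = (v * Real.exp (-b * v ^ 2)) * ∫ θ in Ioo (0:ℝ) π, Real.exp (a * v * Real.cos θ) := by
      simp only [hFdef]
      exact integral_const_mul _ _
    have hexp : Real.exp (-(u ^ 2 + v ^ 2) / (2 * σ ^ 2))
        = Real.exp (-u ^ 2 / (2 * σ ^ 2)) * Real.exp (-b * v ^ 2) := by
      rw [← Real.exp_add]; congr 1; rw [hbdef]; field_simp; ring
    rw [h2, h1, hexp]
    ring
  calc ∫ v in Ioi (0:ℝ),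
      (u / σ ^ 2) * Real.exp (-(u ^ 2 + v ^ 2) / (2 * σ ^ 2)) * besselI0 (u * v / σ ^ 2) * v
      = ∫ v in Ioi (0:ℝ), (u / (π * σ ^ 2) * Real.exp (-u ^ 2 / (2 * σ ^ 2))) *
          ∫ θ in Ioo (0:ℝ) π, F (v, θ) := by
        exact integral_congr_ae (ae_of_all _ fun v => hpt v)
    _ = (u / (π * σ ^ 2) * Real.exp (-u ^ 2 / (2 * σ ^ 2))) *
          ∫ v in Ioi (0:ℝ), ∫ θ in Ioo (0:ℝ) π, F (v, θ) := integral_const_mul _ _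
    _ = u := by
        rw [hiter]
        have hsq : Real.sqrt (π / b) * Real.sqrt (π / b) = π / b :=
          Real.mul_self_sqrt (by positivity)
        have hb2 : π / b = 2 * π * σ ^ 2 := by rw [hbdef]; field_simp
        have hab : a ^ 2 / (4 * b) = u ^ 2 / (2 * σ ^ 2) := by
          rw [hadef, hbdef]; field_simp; ring
        have hee : Real.exp (-u ^ 2 / (2 * σ ^ 2)) * Real.exp (u ^ 2 / (2 * σ ^ 2)) = 1 := by
          rw [← Real.exp_add, neg_div, neg_add_cancel, Real.exp_zero]
        have hne : (π * σ ^ 2 : ℝ) ≠ 0 := by positivity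
        calc (u / (π * σ ^ 2) * Real.exp (-u ^ 2 / (2 * σ ^ 2))) *
              (Real.sqrt (π / b) * Real.exp (a ^ 2 / (4 * b)) * (Real.sqrt (π / b) / 2))
            = (Real.exp (-u ^ 2 / (2 * σ ^ 2)) * Real.exp (a ^ 2 / (4 * b))) *
                (u * (Real.sqrt (π / b) * Real.sqrt (π / b)) / (2 * (π * σ ^ 2))) := by ring
          _ = u := by
              rw [hab, hee, hsq, hb2, one_mul, mul_div_assoc,
                show (2 * π * σ ^ 2) / (2 * (π * σ ^ 2)) = 1 by field_simp, mul_one]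
end
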